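/- Consider the regularized least squares loss ℓ(w,(a,y)) = (aᵀw − y)²/2 + λ‖w‖²/2 with λ > 0 and data z_i = (a_i,y_i), and the stochastic Newton iterated function system with batch size b: partition {1,…,n} into m_b = n/b batches S_1,…,S_{m_b} each of size b, and set h_i(w) = w − η H̃_i^{−1} ((1/b) ∑_{j∈S_i} ∇_w ℓ(w,z_j)), where H̃_i = (1/b)∑_{j∈S_i} a_j a_jᵀ + λI is the mini-batch Hessian; explicitly h_i(w) = (1 − η)w + (η/b) H̃_i^{−1} ∑_{j∈S_i} a_j y_j. For any step-size η ∈ (0,1), every Borel probability measure μ on ℝ^d invariant under this iterated function system satisfies dim̄_H μ ≤ log(n/b) / log(1/(1 − η)). -/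

import Mathlib

open MeasureTheory Filter
open scoped ENNReal RealInnerProductSpace

/-- The upper Hausdorff dimension of a measure:
`dim̄_H μ := inf {dim_H A : A Borel, μ A = 1}`. -/
noncomputable def upperHausdorffDim {X : Type*} [EMetricSpace X] [MeasurableSpace X]
    (μ : Measure X) : ℝ≥0∞ :=
  ⨅ (A : Set X) (_ : MeasurableSet A) (_ : μ A = 1), dimH A

/-!
Since the loss is quadratic, the stochastic Newton step inverts the mini-batch Hessian exactly and
each `h i` is the affine contraction `w ↦ (1 - η) w + η vᵢ`. For any `r`-Lipschitz IFS with
`r < 1`, large closed balls `B` are mapped into themselves by the Hutchinson operator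
`T A = ⋃ i, h i '' A`, and invariance of `μ` gives `μ A ≤ μ (T A)`. Hence `μ B` is at most the mass
of the attractor `⋂ k, T^[k] B`, so `μ` is carried by countably many attractors. Each attractor is
covered by the `m ^ k` images of `B` under words of length `k`, of diameter at most
`r ^ k · diam B`, which bounds its Hausdorff dimension by `log m / log (1 / r)`; finally
`m = n / b`.
-/

open Topology
open scoped NNReal

section IteratedFunctionSystem

variable {ι X : Type*}

def hutchinson (h : ι → X → X) (A : Set X) : Set X := ⋃ i, h i '' A

lemma monotone_hutchinson (h : ι → X → X) : Monotone (hutchinson h) :=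
  fun _ _ hA => Set.iUnion_mono fun _ => Set.image_mono hA

def wordImage (h : ι → X → X) (B : Set X) : (k : ℕ) → (Fin k → ι) → Set X
  | 0, _ => B
  | k + 1, f => h (f 0) '' wordImage h B k (Fin.tail f)

lemma iterate_hutchinson_subset_iUnion_wordImage (h : ι → X → X) (B : Set X) :
    ∀ k, (hutchinson h)^[k] B ⊆ ⋃ f : Fin k → ι, wordImage h B k f
  | 0 => fun x hx => Set.mem_iUnion.mpr ⟨Fin.elim0, hx⟩
  | k + 1 => by
    rw [Function.iterate_succ_apply']
    refine Set.iUnion_subset fun i => ?_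
    refine (Set.image_mono (iterate_hutchinson_subset_iUnion_wordImage h B k)).trans ?_
    rw [Set.image_iUnion]
    refine Set.iUnion_subset fun f => Set.subset_iUnion_of_subset (Fin.cons i f) ?_
    simp [wordImage]

lemma ediam_wordImage_le [PseudoEMetricSpace X] {h : ι → X → X} {r : ℝ≥0}
    (hlip : ∀ i, LipschitzWith r (h i)) (B : Set X) :
    ∀ k (f : Fin k → ι),
      Metric.ediam (wordImage h B k f) ≤ (r : ℝ≥0∞) ^ k * Metric.ediam B
  | 0, _ => by simp [wordImage]
  | k + 1, f => calc
      Metric.ediam (wordImage h B (k + 1) f)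
        ≤ r * Metric.ediam (wordImage h B k (Fin.tail f)) := (hlip (f 0)).ediam_image_le _
      _ ≤ r * (r ^ k * Metric.ediam B) := by gcongr; exact ediam_wordImage_le hlip B k _
      _ = r ^ (k + 1) * Metric.ediam B := by ring

lemma hausdorffMeasure_iInter_iterate_hutchinson_eq_zero [EMetricSpace X] [MeasurableSpace X]
    [BorelSpace X] [Fintype ι] {h : ι → X → X} {r : ℝ≥0} (hr : r < 1)
    (hlip : ∀ i, LipschitzWith r (h i)) {B : Set X} (hB : Metric.ediam B ≠ ∞) {s : ℝ}
    (hs : 0 ≤ s) (hq : Fintype.card ι * (r : ℝ≥0∞) ^ s < 1) :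
    μH[s] (⋂ k, (hutchinson h)^[k] B) = 0 := by
  set q : ℝ≥0∞ := Fintype.card ι * (r : ℝ≥0∞) ^ s
  have hdiam : Tendsto (fun k : ℕ => (r : ℝ≥0∞) ^ k * Metric.ediam B) atTop (𝓝 0) := by
    simpa using ENNReal.Tendsto.mul_const
      (ENNReal.tendsto_pow_atTop_nhds_zero_of_lt_one (mod_cast hr)) (Or.inr hB)
  have hcover := Measure.hausdorffMeasure_le_liminf_sum s (⋂ k, (hutchinson h)^[k] B) _ hdiam
    (wordImage h B) (.of_forall (ediam_wordImage_le hlip B))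
    (.of_forall fun k => (Set.iInter_subset _ k).trans
      (iterate_hutchinson_subset_iUnion_wordImage h B k))
  have hsum : ∀ k, ∑ f : Fin k → ι, Metric.ediam (wordImage h B k f) ^ s
      ≤ q ^ k * Metric.ediam B ^ s := fun k => calc
    _ ≤ ∑ _f : Fin k → ι, ((r : ℝ≥0∞) ^ k * Metric.ediam B) ^ s :=
        Finset.sum_le_sum fun f _ => ENNReal.rpow_le_rpow (ediam_wordImage_le hlip B k f) hs
    _ = q ^ k * Metric.ediam B ^ s := by
        rw [Finset.sum_const, Finset.card_univ, Fintype.card_fun, Fintype.card_fin, nsmul_eq_mul,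
          ENNReal.mul_rpow_of_nonneg _ _ hs, ← ENNReal.rpow_natCast, ← ENNReal.rpow_mul,
          mul_comm (k : ℝ), ENNReal.rpow_mul, ENNReal.rpow_natCast]
        push_cast
        ring
  have hlim : Tendsto (fun k : ℕ => q ^ k * Metric.ediam B ^ s) atTop (𝓝 0) := by
    simpa using ENNReal.Tendsto.mul_const (ENNReal.tendsto_pow_atTop_nhds_zero_of_lt_one hq)
      (Or.inr (ENNReal.rpow_ne_top_of_nonneg hs hB))
  refine le_antisymm (hcover.trans ?_) zero_le
  exact (liminf_le_liminf (.of_forall hsum)).trans hlim.liminf_eq.le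

lemma dimH_iInter_iterate_hutchinson_le [EMetricSpace X] [Fintype ι] [Nonempty ι]
    {h : ι → X → X} {r : ℝ≥0} (hr0 : 0 < r) (hr1 : r < 1)
    (hlip : ∀ i, LipschitzWith r (h i)) {B : Set X} (hB : Metric.ediam B ≠ ∞) :
    dimH (⋂ k, (hutchinson h)^[k] B)
      ≤ ENNReal.ofReal (Real.log (Fintype.card ι) / Real.log (1 / r)) := by
  borelize X
  have hlogr : 0 < Real.log (1 / r) := Real.log_pos (one_lt_one_div hr0 (mod_cast hr1))
  have hN : (0 : ℝ) < Fintype.card ι := mod_cast Fintype.card_pos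
  refine dimH_le fun d hd => le_of_not_gt fun hlt => ?_
  have hd_gt : Real.log (Fintype.card ι) / Real.log (1 / r) < d :=
    (ENNReal.ofReal_lt_iff_lt_toReal (div_nonneg (Real.log_nonneg (mod_cast hN)) hlogr.le)
      ENNReal.coe_ne_top).mp hlt
  have hq : Fintype.card ι * (r : ℝ≥0) ^ (d : ℝ) < 1 := by
    rw [← NNReal.coe_lt_coe]
    push_cast
    rw [← Real.log_neg_iff (by positivity), Real.log_mul hN.ne' (by positivity),
      Real.log_rpow (mod_cast hr0)]
    rw [div_lt_iff₀ hlogr, one_div, Real.log_inv] at hd_gt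
    linarith
  have hq' : Fintype.card ι * (r : ℝ≥0∞) ^ (d : ℝ) < 1 := by
    rw [← ENNReal.coe_rpow_of_ne_zero hr0.ne']
    exact_mod_cast hq
  exact ENNReal.zero_ne_top <|
    (hausdorffMeasure_iInter_iterate_hutchinson_eq_zero hr1 hlip hB d.2 hq').symm.trans hd

lemma isCompact_iterate_hutchinson [TopologicalSpace X] [Finite ι] {h : ι → X → X}
    (hh : ∀ i, Continuous (h i)) {B : Set X} (hB : IsCompact B) (k : ℕ) :
    IsCompact ((hutchinson h)^[k] B) := by
  induction k with
  | zero => exact hB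
  | succ k ih =>
    rw [Function.iterate_succ_apply']
    exact isCompact_iUnion fun i => ih.image (hh i)

lemma measure_le_measure_hutchinson [MeasurableSpace X] [Fintype ι] {h : ι → X → X}
    (hh : ∀ i, Measurable (h i)) {p : ι → ℝ≥0∞} (hp : ∑ i, p i = 1) {μ : Measure X}
    (hinv : μ = ∑ i, p i • μ.map (h i)) {A : Set X} (hA : MeasurableSet (hutchinson h A)) :
    μ A ≤ μ (hutchinson h A) := calc
  μ A = ∑ i, p i * μ A := by rw [← Finset.sum_mul, hp, one_mul]
  _ ≤ ∑ i, p i * μ (h i ⁻¹' hutchinson h A) := by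
    gcongr with i
    exact fun x hx => Set.mem_iUnion.mpr ⟨i, Set.mem_image_of_mem _ hx⟩
  _ = μ (hutchinson h A) := by
    conv_rhs => rw [hinv]
    simp [Measure.map_apply (hh _) hA]

lemma measure_le_measure_iInter_iterate_hutchinson [TopologicalSpace X] [T2Space X]
    [MeasurableSpace X] [BorelSpace X] [Fintype ι] {h : ι → X → X}
    (hh : ∀ i, Continuous (h i)) {p : ι → ℝ≥0∞} (hp : ∑ i, p i = 1) {μ : Measure X}
    [IsFiniteMeasure μ] (hinv : μ = ∑ i, p i • μ.map (h i)) {B : Set X} (hB : IsCompact B)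
    (hBinv : hutchinson h B ⊆ B) :
    μ B ≤ μ (⋂ k, (hutchinson h)^[k] B) := by
  have hmeas : ∀ k, MeasurableSet ((hutchinson h)^[k] B) := fun k =>
    (isCompact_iterate_hutchinson hh hB k).isClosed.measurableSet
  have hanti : Antitone fun k => (hutchinson h)^[k] B := by
    refine antitone_nat_of_succ_le fun k => ?_
    rw [Function.iterate_succ_apply]
    exact (monotone_hutchinson h).iterate k hBinv
  rw [hanti.measure_iInter (fun k => (hmeas k).nullMeasurableSet) ⟨0, measure_ne_top μ _⟩]
  refine le_iInf fun k => ?_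
  induction k with
  | zero => rfl
  | succ k ih =>
    rw [Function.iterate_succ_apply']
    exact ih.trans (measure_le_measure_hutchinson (fun i => (hh i).measurable) hp hinv
      (by rw [← Function.iterate_succ_apply' (hutchinson h)]; exact hmeas _))

lemma hutchinson_closedBall_subset [PseudoMetricSpace X] {h : ι → X → X} {r : ℝ≥0}
    (hlip : ∀ i, LipschitzWith r (h i)) {x : X} {R : ℝ}
    (hR : ∀ i, dist (h i x) x ≤ (1 - r) * R) :
    hutchinson h (Metric.closedBall x R) ⊆ Metric.closedBall x R := by
  refine Set.iUnion_subset fun i => ?_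
  rintro _ ⟨w, hw, rfl⟩
  rw [Metric.mem_closedBall] at hw ⊢
  calc dist (h i w) x ≤ dist (h i w) (h i x) + dist (h i x) x := dist_triangle _ _ _
    _ ≤ r * R + (1 - r) * R := by
      gcongr
      · exact ((hlip i).dist_le_mul w x).trans (by gcongr)
      · exact hR i
    _ = R := by ring

lemma exists_hutchinson_closedBall_subset [PseudoMetricSpace X] [Fintype ι] {h : ι → X → X}
    {r : ℝ≥0} (hr : r < 1) (hlip : ∀ i, LipschitzWith r (h i)) (x : X) :
    ∃ C, ∀ R, C ≤ R → hutchinson h (Metric.closedBall x R) ⊆ Metric.closedBall x R := by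
  have hr' : (0 : ℝ) < 1 - r := sub_pos.mpr (mod_cast hr)
  refine ⟨(∑ i, dist (h i x) x) / (1 - r), fun R hR =>
    hutchinson_closedBall_subset hlip fun i => ?_⟩
  calc dist (h i x) x ≤ ∑ j, dist (h j x) x :=
        Finset.single_le_sum (f := fun j => dist (h j x) x) (fun j _ => dist_nonneg)
          (Finset.mem_univ i)
    _ ≤ (1 - r) * R := (div_le_iff₀' hr').mp hR

end IteratedFunctionSystem

lemma upperHausdorffDim_le_dimH {X : Type*} [EMetricSpace X] [MeasurableSpace X]
    {μ : Measure X} {A : Set X} (hA : MeasurableSet A) (hμA : μ A = 1) :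
    upperHausdorffDim μ ≤ dimH A :=
  iInf₂_le_of_le A hA (iInf_le _ hμA)

theorem upperHausdorffDim_le_of_lipschitzWith {ι X : Type*} [MetricSpace X] [ProperSpace X]
    [MeasurableSpace X] [BorelSpace X] [Fintype ι] {h : ι → X → X} {r : ℝ≥0}
    (hr0 : 0 < r) (hr1 : r < 1) (hlip : ∀ i, LipschitzWith r (h i))
    {p : ι → ℝ≥0∞} (hp : ∑ i, p i = 1) (μ : Measure X) [IsProbabilityMeasure μ]
    (hinv : μ = ∑ i, p i • μ.map (h i)) :
    upperHausdorffDim μ ≤ ENNReal.ofReal (Real.log (Fintype.card ι) / Real.log (1 / r)) := by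
  have : Nonempty ι := by
    by_contra hι
    simp [not_nonempty_iff.mp hι] at hp
  obtain ⟨x⟩ := nonempty_of_isProbabilityMeasure μ
  obtain ⟨C, hC⟩ := exists_hutchinson_closedBall_subset hr1 hlip x
  have hcont : ∀ i, Continuous (h i) := fun i => (hlip i).continuous
  set K := fun t : ℕ => ⋂ k, (hutchinson h)^[k] (Metric.closedBall x (max C t))
  have hK : ∀ t, MeasurableSet (K t) := fun t => .iInter fun k =>
    (isCompact_iterate_hutchinson hcont (isCompact_closedBall x _) k).isClosed.measurableSet
  have hμK : μ (⋃ t, K t) = 1 := by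
    refine le_antisymm prob_le_one ?_
    calc 1 = μ (⋃ t : ℕ, Metric.closedBall x t) := by
          rw [Metric.iUnion_closedBall_nat, measure_univ]
      _ = ⨆ t : ℕ, μ (Metric.closedBall x t) :=
          Monotone.measure_iUnion fun t t' htt' =>
            Metric.closedBall_subset_closedBall (by exact_mod_cast htt')
      _ ≤ μ (⋃ t, K t) := iSup_le fun t => calc
          μ (Metric.closedBall x t) ≤ μ (Metric.closedBall x (max C t)) :=
            measure_mono (Metric.closedBall_subset_closedBall (le_max_right _ _))
          _ ≤ μ (K t) := measure_le_measure_iInter_iterate_hutchinson hcont hp hinv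
            (isCompact_closedBall x _) (hC _ (le_max_left _ _))
          _ ≤ μ (⋃ t, K t) := measure_mono (Set.subset_iUnion K t)
  calc upperHausdorffDim μ ≤ dimH (⋃ t, K t) := upperHausdorffDim_le_dimH (.iUnion hK) hμK
    _ ≤ _ := by
      rw [dimH_iUnion]
      exact iSup_le fun t => dimH_iInter_iterate_hutchinson_le hr0 hr1 hlip
        Metric.isBounded_closedBall.ediam_ne_top

section LeastSquares

open Matrix

lemma hasGradientAt_leastSquaresLoss {E : Type*} [NormedAddCommGroup E] [InnerProductSpace ℝ E]
    [CompleteSpace E] (a : E) (y lam : ℝ) (w : E) :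
    HasGradientAt (fun w' => (⟪a, w'⟫ - y) ^ 2 / 2 + lam * ‖w'‖ ^ 2 / 2)
      ((⟪a, w⟫ - y) • a + lam • w) w := by
  have hlin : HasFDerivAt (fun w' : E => ⟪a, w'⟫ - y) (innerSL ℝ a) w :=
    (innerSL ℝ a).hasFDerivAt.sub_const y
  have hf : (fun w' : E => (⟪a, w'⟫ - y) ^ 2 / 2 + lam * ‖w'‖ ^ 2 / 2) =
      fun w' => 2⁻¹ * (⟪a, w'⟫ - y) ^ 2 + lam / 2 * ‖id w'‖ ^ 2 := by
    funext w'
    simp only [id]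
    ring
  rw [hasGradientAt_iff_hasFDerivAt, hf]
  refine (((hlin.pow 2).const_mul 2⁻¹).add
    ((hasFDerivAt_id w).norm_sq.const_mul (lam / 2))).congr_fderiv ?_
  ext u
  simp
  ring

variable {ι κ : Type*} [Fintype κ] [DecidableEq κ]

lemma toEuclideanLin_vecMulVec_self_apply (u w : EuclideanSpace ℝ κ) :
    toEuclideanLin (vecMulVec (fun k => u k) (fun k => u k)) w = ⟪u, w⟫ • u := by
  have h := InnerProductSpace.symm_toEuclideanLin_rankOne u u
  rw [star_trivial, ← LinearEquiv.eq_symm_apply] at h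
  exact congr($h.symm w)

lemma toEuclideanLin_inv_apply_toEuclideanLin {M : Matrix κ κ ℝ} (hM : IsUnit M)
    (x : EuclideanSpace ℝ κ) : toEuclideanLin M⁻¹ (toEuclideanLin M x) = x := by
  have h := congr($(toLpLin_mul_same 2 M⁻¹ M) x)
  simpa [nonsing_inv_mul _ ((isUnit_iff_isUnit_det M).mp hM)] using h.symm

lemma posDef_smul_sum_vecMulVec_add_smul_one {c lam : ℝ} (hc : 0 ≤ c) (hlam : 0 < lam)
    (s : Finset ι) (u : ι → κ → ℝ) :
    (c • ∑ j ∈ s, vecMulVec (u j) (u j) + lam • (1 : Matrix κ κ ℝ)).PosDef :=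
  PosDef.posSemidef_add ((posSemidef_sum s fun j _ => by
      simpa using posSemidef_vecMulVec_self_star (u j)).smul hc)
    (PosDef.one.smul hlam)

lemma stochasticNewtonStep_leastSquares_eq {b : ℕ} (hb : 0 < b) {s : Finset ι} (hs : s.card = b)
    (a : ι → EuclideanSpace ℝ κ) (y : ι → ℝ) {lam : ℝ} (hlam : 0 < lam)
    {H : Matrix κ κ ℝ}
    (hH : H = (b : ℝ)⁻¹ • ∑ j ∈ s, vecMulVec (fun k => a j k) (fun k => a j k)
      + lam • (1 : Matrix κ κ ℝ)) (η : ℝ) (w : EuclideanSpace ℝ κ) :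
    w - η • toEuclideanLin H⁻¹ ((b : ℝ)⁻¹ • ∑ j ∈ s,
        gradient (fun w' => (⟪a j, w'⟫ - y j) ^ 2 / 2 + lam * ‖w'‖ ^ 2 / 2) w)
      = (1 - η) • w + η • toEuclideanLin H⁻¹ ((b : ℝ)⁻¹ • ∑ j ∈ s, y j • a j) := by
  have hHunit : IsUnit H :=
    hH ▸ (posDef_smul_sum_vecMulVec_add_smul_one (by positivity) hlam _ _).isUnit
  have hHw : toEuclideanLin H w = (b : ℝ)⁻¹ • ∑ j ∈ s, ⟪a j, w⟫ • a j + lam • w := by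
    simp [hH, toEuclideanLin_vecMulVec_self_apply]
  have hgrad : (b : ℝ)⁻¹ • ∑ j ∈ s,
        gradient (fun w' => (⟪a j, w'⟫ - y j) ^ 2 / 2 + lam * ‖w'‖ ^ 2 / 2) w
      = toEuclideanLin H w - (b : ℝ)⁻¹ • ∑ j ∈ s, y j • a j := by
    have hb' : (b : ℝ) ≠ 0 := Nat.cast_ne_zero.mpr hb.ne'
    simp only [fun j => (hasGradientAt_leastSquaresLoss (a j) (y j) lam w).gradient, hHw,
      sub_smul, Finset.sum_add_distrib, Finset.sum_sub_distrib, Finset.sum_const, hs,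
      ← Nat.cast_smul_eq_nsmul ℝ, smul_add, smul_sub, smul_smul, inv_mul_cancel_left₀ hb']
    abel
  rw [hgrad, map_sub, toEuclideanLin_inv_apply_toEuclideanLin hHunit]
  module

end LeastSquares

lemma lipschitzWith_smul_add_const {E : Type*} [SeminormedAddCommGroup E] [NormedSpace ℝ E]
    (c : ℝ≥0) (v : E) : LipschitzWith c fun w => (c : ℝ) • w + v :=
  LipschitzWith.of_dist_le_mul fun w w' => by simp [dist_smul₀]

theorem stochastic_newton_least_squares_hausdorff_dim_bound_general
    (d n b m : ℕ) (hb : 0 < b) (hnm : n = m * b)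
    (a : Fin n → EuclideanSpace ℝ (Fin d)) (y : Fin n → ℝ)
    (lam η : ℝ) (hlam : 0 < lam)
    (hη : 0 < η) (hη' : η < 1)
    (ℓ : EuclideanSpace ℝ (Fin d) → EuclideanSpace ℝ (Fin d) × ℝ → ℝ)
    (hℓ : ∀ w z, ℓ w z = (⟪z.1, w⟫ - z.2) ^ 2 / 2 + lam * ‖w‖ ^ 2 / 2)
    (S : Fin m → Finset (Fin n))
    (hcard : ∀ i, (S i).card = b)
    (Ht : Fin m → Matrix (Fin d) (Fin d) ℝ)
    (hHt : ∀ i, Ht i = ((b : ℝ)⁻¹ • ∑ j ∈ S i,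
      Matrix.vecMulVec (fun k => a j k) (fun k => a j k))
        + lam • (1 : Matrix (Fin d) (Fin d) ℝ))
    (p : Fin m → ℝ≥0∞) (hpsum : ∑ i, p i = 1)
    (h : Fin m → EuclideanSpace ℝ (Fin d) → EuclideanSpace ℝ (Fin d))
    (hdef : ∀ i w, h i w = w - η • Matrix.toEuclideanLin (Ht i)⁻¹
      ((b : ℝ)⁻¹ • ∑ j ∈ S i, gradient (fun w' => ℓ w' (a j, y j)) w))
    (μ : Measure (EuclideanSpace ℝ (Fin d))) [IsProbabilityMeasure μ]
    (hinv : μ = ∑ i, p i • μ.map (h i)) :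
    upperHausdorffDim μ ≤
      ENNReal.ofReal (Real.log ((n : ℝ) / (b : ℝ)) / Real.log (1 / (1 - η))) := by
  set r : ℝ≥0 := ⟨1 - η, sub_nonneg.mpr hη'.le⟩
  have hstep : ∀ i, h i = fun w => (r : ℝ) • w +
      η • Matrix.toEuclideanLin (Ht i)⁻¹ ((b : ℝ)⁻¹ • ∑ j ∈ S i, y j • a j) :=
    fun i => funext fun w => by
      simp only [hdef, hℓ]
      exact stochasticNewtonStep_leastSquares_eq hb (hcard i) a y hlam (hHt i) η w
  have hlip : ∀ i, LipschitzWith r (h i) := fun i => hstep i ▸ lipschitzWith_smul_add_const r _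
  have hnb : (n : ℝ) / b = Fintype.card (Fin m) := by
    rw [hnm, Fintype.card_fin]
    push_cast
    field_simp
  rw [hnb]
  exact upperHausdorffDim_le_of_lipschitzWith (mod_cast sub_pos.mpr hη')
    (mod_cast sub_lt_self 1 hη) hlip hpsum μ hinv

/-- Least squares, stochastic Newton: for the regularized
least squares loss and the stochastic Newton iterated function system
`h_i(w) = w − η H̃_i⁻¹ ((1/b) ∑_{j ∈ S_i} ∇ℓ(w, z_j))` with mini-batch Hessian
`H̃_i = (1/b) ∑_{j ∈ S_i} a_j a_jᵀ + λ I`, any step-size `η ∈ (0,1)` and any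
invariant measure `μ` satisfy `dim̄_H μ ≤ log(n/b) / log(1/(1 − η))`. -/
theorem stochastic_newton_least_squares_hausdorff_dim_bound
    (d n b m : ℕ) (hb : 0 < b) (hnm : n = m * b)
    (a : Fin n → EuclideanSpace ℝ (Fin d)) (y : Fin n → ℝ)
    (lam η : ℝ) (hlam : 0 < lam)
    (hη : 0 < η) (hη' : η < 1)
    (ℓ : EuclideanSpace ℝ (Fin d) → EuclideanSpace ℝ (Fin d) × ℝ → ℝ)
    (hℓ : ∀ w z, ℓ w z = (⟪z.1, w⟫ - z.2) ^ 2 / 2 + lam * ‖w‖ ^ 2 / 2)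
    (S : Fin m → Finset (Fin n))
    (hcard : ∀ i, (S i).card = b)
    (hdisj : ∀ i j, i ≠ j → Disjoint (S i) (S j))
    (hcover : ∀ j : Fin n, ∃ i, j ∈ S i)
    (Ht : Fin m → Matrix (Fin d) (Fin d) ℝ)
    (hHt : ∀ i, Ht i = ((b : ℝ)⁻¹ • ∑ j ∈ S i,
      Matrix.vecMulVec (fun k => a j k) (fun k => a j k))
        + lam • (1 : Matrix (Fin d) (Fin d) ℝ))
    (p : Fin m → ℝ≥0∞) (hp : ∀ i, 0 < p i) (hpsum : ∑ i, p i = 1)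
    (h : Fin m → EuclideanSpace ℝ (Fin d) → EuclideanSpace ℝ (Fin d))
    (hdef : ∀ i w, h i w = w - η • Matrix.toEuclideanLin (Ht i)⁻¹
      ((b : ℝ)⁻¹ • ∑ j ∈ S i, gradient (fun w' => ℓ w' (a j, y j)) w))
    (μ : Measure (EuclideanSpace ℝ (Fin d))) [IsProbabilityMeasure μ]
    (hinv : μ = ∑ i, p i • μ.map (h i)) :
    upperHausdorffDim μ ≤
      ENNReal.ofReal (Real.log ((n : ℝ) / (b : ℝ)) / Real.log (1 / (1 - η))) :=
  stochastic_newton_least_squares_hausdorff_dim_bound_general d n b m hb hnm a y lam η hlam hη hη' ℓ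
    hℓ S hcard Ht hHt p hpsum h hdef μ hinv
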